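/- arXiv:1412.8722 — 3 statements merged into one kernel-verified Lean document; each statement's English description precedes it below -/
import Mathlib

section
/- Let a = (a_1, …, a_d) ∈ ℝ^d be a nonzero vector, c ∈ ℝ, and K = {x ∈ ℝ^d : ∑_i a_i x_i = c}. Then the image φ(K) of K under the quotient map φ : ℝ^d → T^d = ℝ^d/ℤ^d is a closed subset of T^d if and only if for all indices i, j with a_j ≠ 0 the ratio a_i/a_j is rational. -/
/-!
A point `x` lies over `φ K` exactly when `a ⬝ᵥ x - c` lies in the group `Λ = ℤ a₁ + ⋯ + ℤ a_d`,
so `φ⁻¹ (φ K)` is the preimage of the coset `c + Λ` under the linear form `x ↦ a ⬝ᵥ x`. As `φ` is a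
quotient map and that form has a continuous section, `φ K` is closed iff `Λ` is closed in `ℝ`.
A countable closed subgroup of `ℝ` cannot be dense, so it is cyclic; and `Λ` lies in a cyclic
group iff the `aᵢ` are pairwise commensurable.
-/

open scoped BigOperators

noncomputable section

/-- The flat `d`-dimensional torus `ℝ^d / ℤ^d`, modeled as a product of circles `ℝ/ℤ`. -/
abbrev FlatTorus (d : ℕ) := Fin d → AddCircle (1 : ℝ)

/-- The quotient map `φ : ℝ^d → T^d`. -/
def torusQuot (d : ℕ) : (Fin d → ℝ) → FlatTorus d := fun x i => (x i : AddCircle (1 : ℝ))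

/-- A closed codimension-one subtorus of `T^d`: the image under `φ` of an affine hyperplane
`{x | ∑ i, a i * x i = c}` with `a` a primitive integer vector. -/
def IsCodimOneSubtorus {d : ℕ} (A : Set (FlatTorus d)) : Prop :=
  ∃ (a : Fin d → ℤ) (c : ℝ),
    Finset.univ.gcd a = 1 ∧
    A = torusQuot d '' {x | ∑ i, (a i : ℝ) * x i = c}

lemma AddSubgroup.exists_eq_zmultiples_of_isClosed_of_countable {S : AddSubgroup ℝ}
    (hS : IsClosed (S : Set ℝ)) (hc : (S : Set ℝ).Countable) :
    ∃ g, S = AddSubgroup.zmultiples g := by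
  rcases S.dense_or_cyclic with hd | ⟨g, rfl⟩
  · have : (Set.univ : Set ℝ).Countable := by rwa [← hd.closure_eq, hS.closure_eq]
    exact absurd this Cardinal.not_countable_real
  · exact ⟨g, (AddSubgroup.zmultiples_eq_closure g).symm⟩

lemma exists_rat_div_eq_of_mem_zmultiples {g x y : ℝ} (hx : x ∈ AddSubgroup.zmultiples g)
    (hy : y ∈ AddSubgroup.zmultiples g) (hy0 : y ≠ 0) : ∃ q : ℚ, x / y = q := by
  obtain ⟨m, rfl⟩ := hx
  obtain ⟨n, rfl⟩ := hy
  refine ⟨m / n, ?_⟩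
  have hn : (n : ℝ) ≠ 0 := by rintro h; simp [h] at hy0
  have hg : g ≠ 0 := by rintro rfl; simp at hy0
  push_cast
  simp only [zsmul_eq_mul]
  field_simp

lemma AddSubgroup.isClosed_of_le_zmultiples {S : AddSubgroup ℝ} {t : ℝ}
    (h : S ≤ AddSubgroup.zmultiples t) : IsClosed (S : Set ℝ) :=
  have : DiscreteTopology S := DiscreteTopology.of_subset (s := (AddSubgroup.zmultiples t : Set ℝ))
    (inferInstanceAs (DiscreteTopology (AddSubgroup.zmultiples t))) h
  AddSubgroup.isClosed_of_discrete

section LatticeOfCoefficients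

variable {ι : Type*} [Fintype ι]

lemma AddSubgroup.countable_closure_range (a : ι → ℝ) :
    (AddSubgroup.closure (Set.range a) : Set ℝ).Countable := by
  refine (Set.countable_range fun n : ι → ℤ => ∑ i, n i • a i).mono fun x hx => ?_
  obtain ⟨n, rfl⟩ := AddSubgroup.mem_closure_range_iff_of_fintype.mp hx
  exact ⟨n, rfl⟩

lemma exists_closure_range_le_zmultiples {a : ι → ℝ}
    (h : ∀ i j, a j ≠ 0 → ∃ q : ℚ, a i / a j = q) :
    ∃ t, AddSubgroup.closure (Set.range a) ≤ AddSubgroup.zmultiples t := by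
  by_cases ha : ∀ j, a j = 0
  · refine ⟨0, AddSubgroup.closure_le _ |>.mpr ?_⟩
    rintro _ ⟨i, rfl⟩
    simp [ha i]
  push Not at ha
  obtain ⟨j, hj⟩ := ha
  choose q hq using fun i => h i j hj
  -- with `N` a common denominator of the `q i`, every `a i` is an integer multiple of `a j / N`
  obtain ⟨N, hN⟩ := IsLocalization.exist_integer_multiples_of_finite (nonZeroDivisors ℤ) q
  refine ⟨a j / (N : ℤ), AddSubgroup.closure_le _ |>.mpr ?_⟩
  rintro _ ⟨i, rfl⟩
  obtain ⟨m, hm⟩ := hN i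
  refine ⟨m, ?_⟩
  have hN0 : ((N : ℤ) : ℝ) ≠ 0 := by exact_mod_cast nonZeroDivisors.coe_ne_zero N
  have hmq : (m : ℝ) = (N : ℤ) * q i := by exact_mod_cast hm
  change m • (a j / _) = a i
  rw [zsmul_eq_mul, hmq, ← hq i]
  field_simp

theorem isClosed_closure_range_iff_exists_rat_div (a : ι → ℝ) :
    IsClosed (AddSubgroup.closure (Set.range a) : Set ℝ) ↔
      ∀ i j, a j ≠ 0 → ∃ q : ℚ, a i / a j = q := by
  constructor
  · intro hS i j hj
    obtain ⟨g, hg⟩ := AddSubgroup.exists_eq_zmultiples_of_isClosed_of_countable hS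
      (AddSubgroup.countable_closure_range a)
    have hmem : ∀ k, a k ∈ AddSubgroup.zmultiples g := fun k =>
      hg ▸ AddSubgroup.subset_closure (Set.mem_range_self k)
    exact exists_rat_div_eq_of_mem_zmultiples (hmem i) (hmem j) hj
  · intro h
    obtain ⟨t, ht⟩ := exists_closure_range_le_zmultiples h
    exact AddSubgroup.isClosed_of_le_zmultiples ht

lemma isClosed_of_isClosed_preimage_dotProduct [DecidableEq ι] {a : ι → ℝ} {j : ι}
    (hj : a j ≠ 0) {S : Set ℝ} (hS : IsClosed ((a ⬝ᵥ ·) ⁻¹' S)) : IsClosed S := by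
  have hσ : Continuous fun t : ℝ => Pi.single (M := fun _ => ℝ) j (t / a j) :=
    (continuous_single j).comp (continuous_id.div_const _)
  convert hS.preimage hσ
  ext t
  simp [dotProduct_single, mul_div_cancel₀ _ hj]

end LatticeOfCoefficients

lemma isOpenQuotientMap_torusQuot (d : ℕ) : IsOpenQuotientMap (torusQuot d) :=
  IsOpenQuotientMap.piMap fun _ => QuotientAddGroup.isOpenQuotientMap_mk

lemma torusQuot_eq_torusQuot_iff {d : ℕ} {x y : Fin d → ℝ} :
    torusQuot d x = torusQuot d y ↔ ∃ n : Fin d → ℤ, y = x + ((↑) ∘ n) := by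
  have hcoord : ∀ i, torusQuot d x i = torusQuot d y i ↔ ∃ k : ℤ, y i = x i + k := fun i => by
    change ((x i : ℝ) : AddCircle (1 : ℝ)) = y i ↔ _
    rw [eq_comm, ← sub_eq_zero, ← AddCircle.coe_sub, AddCircle.coe_eq_zero_iff]
    simp only [zsmul_one]
    exact exists_congr fun k => by rw [eq_comm, sub_eq_iff_eq_add']
  simp only [funext_iff, hcoord, Classical.skolem]
  rfl

lemma preimage_torusQuot_image_hyperplane {d : ℕ} (a : Fin d → ℝ) (c : ℝ) :
    torusQuot d ⁻¹' (torusQuot d '' {y | a ⬝ᵥ y = c}) =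
      (a ⬝ᵥ ·) ⁻¹' ((· - c) ⁻¹' AddSubgroup.closure (Set.range a)) := by
  ext x
  simp only [Set.mem_preimage, Set.mem_image, Set.mem_ofPred_eq, torusQuot_eq_torusQuot_iff,
    SetLike.mem_coe, AddSubgroup.mem_closure_range_iff_of_fintype]
  have hdot : ∀ n : Fin d → ℤ, a ⬝ᵥ ((↑) ∘ n) = ∑ i, n i • a i := fun n => by
    simp only [dotProduct, Function.comp_apply, zsmul_eq_mul, mul_comm]
  constructor
  · rintro ⟨y, rfl, n, rfl⟩
    exact ⟨n, by rw [dotProduct_add, add_sub_cancel_left, hdot]⟩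
  · rintro ⟨n, hn⟩
    refine ⟨x - (↑) ∘ n, ?_, n, (sub_add_cancel _ _).symm⟩
    rw [dotProduct_sub, hdot, ← hn, sub_sub_cancel]

theorem image_hyperplane_isClosed_iff_rational_ratios_general
    (d : ℕ) (a : Fin d → ℝ) (c : ℝ) :
    IsClosed (torusQuot d '' {x | ∑ i, a i * x i = c}) ↔
      ∀ i j, a j ≠ 0 → ∃ q : ℚ, a i / a j = (q : ℝ) := by
  change IsClosed (torusQuot d '' {x | a ⬝ᵥ x = c}) ↔ _
  rw [← (isOpenQuotientMap_torusQuot d).isQuotientMap.isClosed_preimage,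
    preimage_torusQuot_image_hyperplane]
  constructor
  · intro h i j hj
    refine (isClosed_closure_range_iff_exists_rat_div a).mp ?_ i j hj
    exact (Homeomorph.subRight c).isClosed_preimage.mp
      (isClosed_of_isClosed_preimage_dotProduct hj h)
  · intro h
    exact ((isClosed_closure_range_iff_exists_rat_div a).mpr h).preimage (by fun_prop) |>.preimage (by fun_prop)

/-- For a nonzero real vector `a` and `c ∈ ℝ`, the image in `T^d` of the hyperplane
`{x | ∑ i, a i * x i = c}` is closed iff all ratios `a i / a j` (with `a j ≠ 0`)
are rational. -/
theorem image_hyperplane_isClosed_iff_rational_ratios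
    (d : ℕ) (a : Fin d → ℝ) (ha : a ≠ 0) (c : ℝ) :
    IsClosed (torusQuot d '' {x | ∑ i, a i * x i = c}) ↔
      ∀ i j, a j ≠ 0 → ∃ q : ℚ, a i / a j = (q : ℝ) :=
  image_hyperplane_isClosed_iff_rational_ratios_general d a c
end
end

section
/- Let d ≥ 2, let K_1 = {x ∈ ℝ^d : x_1 = 0}, and let K_2 = {x ∈ ℝ^d : ∑_i a_i x_i = c} where a = (a_1, …, a_d) ∈ ℤ^d is a primitive integer vector with (a_2, …, a_d) ≠ 0 and c ∈ ℤ. Then the intersection φ(K_1) ∩ φ(K_2) of the two corresponding subtori in T^d = ℝ^d/ℤ^d has exactly gcd(a_2, …, a_d) connected components. -/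
open scoped BigOperators

noncomputable section

/-! Write `g = gcd(a₂, …, a_d)` and `aᵢ = g bᵢ` for `i ≥ 2`. Since `a` is primitive, the second
subtorus is `{y | ∑ aᵢ yᵢ = 0}`, so inside the first one the intersection is the preimage of the
`g` points of `g`-torsion of `ℝ/ℤ` under `F y = ∑_{i ≥ 2} bᵢ yᵢ`. As `(bᵢ)_{i ≥ 2}` is primitive,
Bézout shows that each level set of `F` in `{y₁ = 0}` is the image of a nonempty affine piece
of `{x₁ = 0}`, hence connected; so the components are exactly these `g` level sets. -/

theorem AddCircle.natCard_setOf_zsmul_eq_zero {m : ℤ} (hm : m ≠ 0) :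
    Nat.card {u : UnitAddCircle | m • u = 0} = m.natAbs := by
  have : NeZero m.natAbs := ⟨Int.natAbs_ne_zero.2 hm⟩
  have hrange : Set.range (ZMod.toAddCircle : ZMod m.natAbs → UnitAddCircle)
      = {u | m • u = 0} := by
    ext u
    simp only [Set.mem_range, Set.mem_ofPred_eq, ← natAbs_nsmul_eq_zero]
    constructor
    · rintro ⟨j, rfl⟩
      rw [← map_nsmul, nsmul_eq_mul, ZMod.natCast_self, zero_mul, map_zero]
    · intro hu
      obtain ⟨k, -, rfl⟩ := (AddCircle.nsmul_eq_zero_iff (Nat.pos_of_neZero _)).1 hu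
      exact ⟨k, by rw [ZMod.toAddCircle_natCast, mul_one]⟩
  rw [← hrange, Nat.card_range_of_injective (ZMod.toAddCircle_injective _), Nat.card_zmod]

theorem Continuous.bijective_connectedComponentsLift {X Y : Type*} [TopologicalSpace X]
    [TopologicalSpace Y] [TotallyDisconnectedSpace Y] {f : X → Y} (hf : Continuous f)
    (hsurj : Function.Surjective f) (hfib : ∀ y, IsPreconnected (f ⁻¹' {y})) :
    Function.Bijective hf.connectedComponentsLift := by
  refine ⟨fun u v huv => ?_, fun y => ?_⟩
  · obtain ⟨x, rfl⟩ := ConnectedComponents.surjective_coe u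
    obtain ⟨x', rfl⟩ := ConnectedComponents.surjective_coe v
    rw [hf.connectedComponentsLift_apply_coe, hf.connectedComponentsLift_apply_coe] at huv
    refine ConnectedComponents.coe_eq_coe.2 (connectedComponent_eq ?_)
    exact (hfib (f x)).subset_connectedComponent rfl huv.symm
  · obtain ⟨x, rfl⟩ := hsurj y
    exact ⟨x, hf.connectedComponentsLift_apply_coe x⟩

section Hyperplane

variable {ι : Type*} (s : Finset ι)

theorem exists_sum_intCast_mul_eq_one {b : ι → ℤ} (hb : s.gcd b = 1) :
    ∃ u : ι → ℤ, ∑ i ∈ s, (b i : ℝ) * u i = 1 := by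
  obtain ⟨u, hu⟩ := s.gcd_eq_sum_mul b
  exact ⟨u, by exact_mod_cast (hb ▸ hu).symm⟩

theorem exists_intCast_add_sum_mul_eq {b : ι → ℤ} (hb : s.gcd b = 1) {x : ι → ℝ} {r : ℝ}
    (h : ((∑ i ∈ s, (b i : ℝ) * x i : ℝ) : AddCircle (1 : ℝ)) = r) :
    ∃ n : ι → ℤ, (∀ i ∉ s, n i = 0) ∧ ∑ i ∈ s, (b i : ℝ) * (x i + n i) = r := by
  classical
  obtain ⟨k, hk⟩ := (AddCircle.coe_eq_zero_iff 1).1 (by rw [AddCircle.coe_sub, h, sub_self] :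
    ((∑ i ∈ s, (b i : ℝ) * x i - r : ℝ) : AddCircle (1 : ℝ)) = 0)
  rw [zsmul_one] at hk
  obtain ⟨u, hu⟩ := exists_sum_intCast_mul_eq_one s hb
  refine ⟨fun i => if i ∈ s then -k * u i else 0, fun i hi => if_neg hi, ?_⟩
  calc ∑ i ∈ s, (b i : ℝ) * (x i + ((if i ∈ s then -k * u i else 0 : ℤ) : ℝ))
      = ∑ i ∈ s, (b i : ℝ) * x i - k * ∑ i ∈ s, (b i : ℝ) * u i := by
        rw [Finset.mul_sum, ← Finset.sum_sub_distrib]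
        refine Finset.sum_congr rfl fun i hi => ?_
        rw [if_pos hi]; push_cast; ring
    _ = r := by rw [hu, hk]; ring

theorem convex_setOf_sum_mul_eq (b : ι → ℝ) (r : ℝ) :
    Convex ℝ {x : ι → ℝ | (∀ i ∉ s, x i = 0) ∧ ∑ i ∈ s, b i * x i = r} := by
  rintro x ⟨hx0, hxr⟩ y ⟨hy0, hyr⟩ t u - - htu
  refine ⟨fun i hi => by simp [hx0 i hi, hy0 i hi], ?_⟩
  simp only [Pi.add_apply, Pi.smul_apply, smul_eq_mul, mul_add, Finset.sum_add_distrib,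
    mul_left_comm _ t, mul_left_comm _ u, ← Finset.mul_sum, hxr, hyr, ← add_mul, htu, one_mul]

theorem nonempty_setOf_sum_mul_eq {b : ι → ℤ} (hb : s.gcd b = 1) (r : ℝ) :
    {x : ι → ℝ | (∀ i ∉ s, x i = 0) ∧ ∑ i ∈ s, (b i : ℝ) * x i = r}.Nonempty := by
  classical
  obtain ⟨u, hu⟩ := exists_sum_intCast_mul_eq_one s hb
  refine ⟨fun i => if i ∈ s then r * u i else 0, fun i hi => if_neg hi, ?_⟩
  calc ∑ i ∈ s, (b i : ℝ) * (if i ∈ s then r * u i else 0)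
      = r * ∑ i ∈ s, (b i : ℝ) * u i := by
        rw [Finset.mul_sum]
        exact Finset.sum_congr rfl fun i hi => by rw [if_pos hi]; ring
    _ = r := by rw [hu, mul_one]

end Hyperplane

section Torus

variable {d : ℕ}

theorem continuous_torusQuot : Continuous (torusQuot d) :=
  continuous_pi fun i => continuous_quotient_mk'.comp (continuous_apply i)

theorem torusQuot_add_intCast (x : Fin d → ℝ) (n : Fin d → ℤ) :
    torusQuot d (x + fun i => (n i : ℝ)) = torusQuot d x := by
  funext i
  simp [torusQuot]

theorem sum_zsmul_torusQuot (s : Finset (Fin d)) (b : Fin d → ℤ) (x : Fin d → ℝ) :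
    ∑ i ∈ s, b i • torusQuot d x i = ((∑ i ∈ s, (b i : ℝ) * x i : ℝ) : AddCircle (1 : ℝ)) := by
  simp [torusQuot, ← zsmul_eq_mul]

theorem exists_torusQuot_eq_of_forall_notMem_eq_zero (s : Finset (Fin d)) {y : FlatTorus d}
    (hy : ∀ i ∉ s, y i = 0) : ∃ x, (∀ i ∉ s, x i = 0) ∧ torusQuot d x = y := by
  classical
  choose x hx using fun i => QuotientAddGroup.mk_surjective (y i)
  refine ⟨fun i => if i ∈ s then x i else 0, fun i hi => if_neg hi, funext fun i => ?_⟩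
  by_cases hi : i ∈ s
  · simp [torusQuot, hi, hx]
  · simp [torusQuot, hi, hy i hi]

theorem image_torusQuot_setOf_sum_mul_eq (s : Finset (Fin d)) {b : Fin d → ℤ}
    (hb : s.gcd b = 1) (r : ℝ) :
    torusQuot d '' {x | (∀ i ∉ s, x i = 0) ∧ ∑ i ∈ s, (b i : ℝ) * x i = r}
      = {y | (∀ i ∉ s, y i = 0) ∧ ∑ i ∈ s, b i • y i = (r : AddCircle (1 : ℝ))} := by
  ext y
  constructor
  · rintro ⟨x, ⟨hx0, hxr⟩, rfl⟩
    refine ⟨fun i hi => ?_, by rw [sum_zsmul_torusQuot, hxr]⟩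
    simp [torusQuot, hx0 i hi]
  · rintro ⟨hy0, hyr⟩
    obtain ⟨x, hx0, rfl⟩ := exists_torusQuot_eq_of_forall_notMem_eq_zero s hy0
    obtain ⟨n, hn0, hnr⟩ := exists_intCast_add_sum_mul_eq s hb (x := x) (r := r)
      (by rw [← sum_zsmul_torusQuot, hyr])
    exact ⟨x + fun i => (n i : ℝ), ⟨fun i hi => by simp [hx0 i hi, hn0 i hi], hnr⟩,
      torusQuot_add_intCast x n⟩

theorem natCard_connectedComponents_setOf_sum_zsmul_eq_zero (s : Finset (Fin d))
    {a : Fin d → ℤ} (ha : s.gcd a ≠ 0) :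
    Nat.card (ConnectedComponents
        {y : FlatTorus d | (∀ i ∉ s, y i = 0) ∧ ∑ i ∈ s, a i • y i = 0})
      = (s.gcd a).natAbs := by
  obtain ⟨b, hab, hb⟩ := s.extract_gcd a
    (Finset.nonempty_iff_ne_empty.2 fun hs => ha (by rw [hs, Finset.gcd_empty]))
  set g := s.gcd a
  set F : FlatTorus d → AddCircle (1 : ℝ) := fun y => ∑ i ∈ s, b i • y i
  have hF : ∀ y, ∑ i ∈ s, a i • y i = g • F y := fun y => by
    simp only [F, Finset.smul_sum, smul_smul]
    exact Finset.sum_congr rfl fun i hi => by rw [hab i hi]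
  set S := {y : FlatTorus d | (∀ i ∉ s, y i = 0) ∧ ∑ i ∈ s, a i • y i = 0}
  set T := {u : UnitAddCircle | g • u = 0}
  have hTcard : Nat.card T = g.natAbs := AddCircle.natCard_setOf_zsmul_eq_zero ha
  have : Finite T := Nat.finite_of_card_ne_zero (by rw [hTcard]; exact Int.natAbs_ne_zero.2 ha)
  let f : S → T := fun y => ⟨F y, by rw [Set.mem_ofPred_eq, ← hF]; exact y.2.2⟩
  have hf : Continuous f := by fun_prop
  have hfib : ∀ t : T, ∃ r : ℝ, Subtype.val '' (f ⁻¹' {t})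
      = torusQuot d '' {x | (∀ i ∉ s, x i = 0) ∧ ∑ i ∈ s, (b i : ℝ) * x i = r} := by
    rintro ⟨t, ht⟩
    obtain ⟨r, rfl⟩ := QuotientAddGroup.mk_surjective t
    refine ⟨r, ?_⟩
    rw [image_torusQuot_setOf_sum_mul_eq s hb]
    ext y
    constructor
    · rintro ⟨y, hy, rfl⟩
      exact ⟨y.2.1, congrArg Subtype.val hy⟩
    · rintro ⟨hy0, hyr⟩
      exact ⟨⟨y, hy0, by rw [hF, show F y = r from hyr]; exact ht⟩, Subtype.ext hyr, rfl⟩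
  rw [← hTcard]
  refine Nat.card_eq_of_bijective _ (hf.bijective_connectedComponentsLift (fun t => ?_) fun t => ?_)
  · obtain ⟨r, hr⟩ := hfib t
    obtain ⟨-, ⟨y, hy, -⟩⟩ := hr ▸ (nonempty_setOf_sum_mul_eq s hb r).image (torusQuot d)
    exact ⟨y, hy⟩
  · obtain ⟨r, hr⟩ := hfib t
    rw [← Topology.IsInducing.subtypeVal.isPreconnected_image, hr]
    exact (convex_setOf_sum_mul_eq s _ r).isPreconnected.image _ continuous_torusQuot.continuousOn

theorem inter_subtori_eq_setOf_sum_zsmul_eq_zero (i₀ : Fin d) {a : Fin d → ℤ}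
    (ha : Finset.univ.gcd a = 1) (c : ℤ) :
    torusQuot d '' {x | x i₀ = 0} ∩ torusQuot d '' {x | ∑ i, (a i : ℝ) * x i = c}
      = {y | (∀ i ∉ Finset.univ.erase i₀, y i = 0) ∧
          ∑ i ∈ Finset.univ.erase i₀, a i • y i = 0} := by
  have h₁ : torusQuot d '' {x | ∑ i, (a i : ℝ) * x i = c} = {y | ∑ i, a i • y i = 0} := by
    have hc : ((c : ℝ) : AddCircle (1 : ℝ)) = 0 := (AddCircle.coe_eq_zero_iff 1).2 ⟨c, by simp⟩
    simpa [hc] using image_torusQuot_setOf_sum_mul_eq Finset.univ ha c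
  have h₂ : torusQuot d '' {x | x i₀ = 0} = {y | y i₀ = 0} := by
    ext y
    constructor
    · rintro ⟨x, hx, rfl⟩
      simp [torusQuot, hx.out]
    · intro hy
      obtain ⟨x, hx, rfl⟩ :=
        exists_torusQuot_eq_of_forall_notMem_eq_zero (Finset.univ.erase i₀) (y := y)
          (by simpa using hy)
      exact ⟨x, hx i₀ (by simp), rfl⟩
  ext y
  rw [h₁, h₂, Set.mem_inter_iff]
  simp only [Set.mem_ofPred_eq, Finset.mem_erase, Finset.mem_univ, and_true, not_not, forall_eq]
  rw [← Finset.add_sum_erase _ _ (Finset.mem_univ i₀)]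
  constructor <;> rintro ⟨h₀, h⟩ <;> simp_all

end Torus

/-- For `d ≥ 2`, the intersection in `T^d` of the subtorus `φ({x | x 1 = 0})` with the
subtorus `φ({x | ∑ i, a i * x i = c})`, for a primitive integer vector `a` with
`(a 2, …, a d) ≠ 0` and `c ∈ ℤ`, has exactly `gcd(a 2, …, a d)` connected components. -/
theorem card_components_inter_subtori
    (d : ℕ) (hd : 2 ≤ d) (a : Fin d → ℤ) (c : ℤ)
    (ha : Finset.univ.gcd a = 1)
    (ha' : ∃ i : Fin d, i ≠ ⟨0, by omega⟩ ∧ a i ≠ 0) :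
    (Nat.card (ConnectedComponents
        ↥((torusQuot d '' {x | x ⟨0, by omega⟩ = 0}) ∩
          (torusQuot d '' {x | ∑ i, (a i : ℝ) * x i = (c : ℝ)}))) : ℤ)
      = (Finset.univ.erase (⟨0, by omega⟩ : Fin d)).gcd a := by
  obtain ⟨j, hj, hja⟩ := ha'
  have hg : (Finset.univ.erase ⟨0, by omega⟩).gcd a ≠ 0 := fun h =>
    hja (Finset.gcd_eq_zero_iff.1 h j (Finset.mem_erase.2 ⟨hj, Finset.mem_univ j⟩))
  rw [inter_subtori_eq_setOf_sum_zsmul_eq_zero _ ha,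
    natCard_connectedComponents_setOf_sum_zsmul_eq_zero _ hg, Int.natCast_natAbs, Int.abs_eq_normalize, Finset.normalize_gcd]
end
end

section
/- Let d ≥ 2, n > d, and let 0 ≤ k ≤ d − 1 be an integer. Let c_1, …, c_{n−k} be real numbers with pairwise distinct fractional parts. Consider the n subtori of T^d = ℝ^d/ℤ^d that are the images under φ of the hyperplanes x_i = 0 for 1 ≤ i ≤ k and x_{k+1} = c_j for 1 ≤ j ≤ n − k. Then the complement in T^d of the union of these n subtori has exactly n − k connected components. -/
open scoped BigOperators

noncomputable section

/-!
Let `K` be the coordinate `k + 1`. The complement is a product: in coordinate `K` the circle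
minus the `m = n - k` distinct points `c j`, before `K` circles punctured at `0`, after `K` full
circles. Removing `m ≥ 1` distinct points cuts the circle into `m` open arcs, each running
counterclockwise from one removed point to the next. All other factors are connected, so the
complement is the disjoint union of the `m` open connected sets `{y | y K ∈ arc j}`, which are
therefore its connected components.
-/

open Set Filter Topology

namespace UnitAddCircle

def ccwDist (w z : UnitAddCircle) : ℝ := AddCircle.equivIco 1 0 (z - w)

variable {a b c w z : UnitAddCircle} {t : ℝ}

theorem ccwDist_mem_Ico (w z : UnitAddCircle) : ccwDist w z ∈ Ico 0 1 := by
  simpa [ccwDist] using (AddCircle.equivIco 1 0 (z - w)).2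

theorem coe_ccwDist (w z : UnitAddCircle) : (ccwDist w z : UnitAddCircle) = z - w :=
  AddCircle.coe_equivIco

theorem ccwDist_eq_iff : ccwDist w z = t ↔ t ∈ Ico 0 1 ∧ (t : UnitAddCircle) = z - w := by
  constructor
  · rintro rfl
    exact ⟨ccwDist_mem_Ico w z, coe_ccwDist w z⟩
  · rintro ⟨ht, h⟩
    rw [ccwDist, ← h, AddCircle.equivIco_coe_of_mem (by simpa using ht)]

theorem ccwDist_add_coe (w : UnitAddCircle) (ht : t ∈ Ico 0 1) : ccwDist w (w + t) = t :=
  ccwDist_eq_iff.mpr ⟨ht, by abel⟩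

theorem ccwDist_zero_coe (x : ℝ) : ccwDist 0 x = Int.fract x := by
  simp [ccwDist, AddCircle.coe_equivIco_mk_apply]

theorem ccwDist_pos_iff : 0 < ccwDist w z ↔ z ≠ w := by
  rw [(ccwDist_mem_Ico w z).1.lt_iff_ne', Ne, Ne, ccwDist_eq_iff]
  simp [sub_eq_zero, eq_comm]

theorem ccwDist_add_ccwDist (h : ccwDist a b + ccwDist b c < 1) :
    ccwDist a c = ccwDist a b + ccwDist b c :=
  ccwDist_eq_iff.mpr ⟨⟨add_nonneg (ccwDist_mem_Ico a b).1 (ccwDist_mem_Ico b c).1, h⟩, by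
    rw [AddCircle.coe_add, coe_ccwDist, coe_ccwDist]; abel⟩

theorem ccwDist_sub_ccwDist (h : ccwDist a b ≤ ccwDist a c) :
    ccwDist b c = ccwDist a c - ccwDist a b :=
  ccwDist_eq_iff.mpr ⟨⟨sub_nonneg.mpr h, by
    linarith [(ccwDist_mem_Ico a c).2, (ccwDist_mem_Ico a b).1]⟩, by
    rw [AddCircle.coe_sub, coe_ccwDist, coe_ccwDist]; abel⟩

theorem ccwDist_add_ccwDist_swap (h : a ≠ b) : ccwDist a b + ccwDist b a = 1 := by
  have hpos : 0 < ccwDist a b := ccwDist_pos_iff.mpr h.symm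
  have : ccwDist b a = 1 - ccwDist a b := ccwDist_eq_iff.mpr
    ⟨⟨by linarith [(ccwDist_mem_Ico a b).2], by linarith⟩, by
      rw [AddCircle.coe_sub, coe_ccwDist, AddCircle.coe_period]; abel⟩
  linarith

theorem continuousOn_ccwDist (w : UnitAddCircle) : ContinuousOn (ccwDist w) {w}ᶜ := by
  intro z hz
  have hzw : z - w ≠ ((0 : ℝ) : UnitAddCircle) := by simpa [sub_eq_zero] using hz
  exact (continuous_subtype_val.continuousAt.comp <|
    ContinuousAt.comp (g := AddCircle.equivIco 1 0) (f := (· - w))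
      (AddCircle.continuousAt_equivIco 1 0 hzw) (continuous_sub_right w).continuousAt)
    |>.continuousWithinAt

theorem preimage_ccwDist (w : UnitAddCircle) (s : Set ℝ) :
    ccwDist w ⁻¹' s = (fun t : ℝ => w + t) '' (s ∩ Ico 0 1) := by
  ext z
  constructor
  · intro hz
    exact ⟨ccwDist w z, ⟨hz, ccwDist_mem_Ico w z⟩, by simp only [coe_ccwDist]; abel⟩
  · rintro ⟨t, ⟨hs, ht⟩, rfl⟩
    rwa [mem_preimage, ccwDist_add_coe w ht]

theorem isPreconnected_preimage_ccwDist (w : UnitAddCircle) {s : Set ℝ} (hs : s.OrdConnected) :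
    IsPreconnected (ccwDist w ⁻¹' s) := by
  rw [preimage_ccwDist]
  exact (hs.inter ordConnected_Ico).isPreconnected.image _
    (continuous_const.add (AddCircle.continuous_mk' 1)).continuousOn

section arc

variable {ι : Type*} (C : ι → UnitAddCircle)

/-- The open arc from `C j` counterclockwise to the next point of `C`; if there is no other
point, the whole circle minus `C j`. -/
def arc (j : ι) : Set UnitAddCircle :=
  ccwDist (C j) ⁻¹' (Ioi 0 ∩ ⋂ (i) (_ : i ≠ j), Iio (ccwDist (C j) (C i)))

variable {C}

theorem mem_arc {j : ι} :
    z ∈ arc C j ↔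
      0 < ccwDist (C j) z ∧ ∀ i ≠ j, ccwDist (C j) z < ccwDist (C j) (C i) := by
  simp [arc]

theorem isPreconnected_arc (j : ι) : IsPreconnected (arc C j) :=
  isPreconnected_preimage_ccwDist _ inferInstance

theorem isOpen_arc [Finite ι] (j : ι) : IsOpen (arc C j) := by
  have hsub : arc C j ⊆ {C j}ᶜ := fun z hz => ccwDist_pos_iff.mp (mem_arc.mp hz).1
  rw [← inter_eq_right.mpr hsub]
  exact (continuousOn_ccwDist _).isOpen_inter_preimage isOpen_compl_singleton
    (isOpen_Ioi.inter <|
      isOpen_iInter_of_finite fun _ => isOpen_iInter_of_finite fun _ => isOpen_Iio)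

theorem arc_subset_compl_range (j : ι) : arc C j ⊆ (range C)ᶜ := by
  rintro z hz ⟨i, rfl⟩
  obtain ⟨hpos, hlt⟩ := mem_arc.mp hz
  by_cases hij : i = j
  · subst hij
    exact hpos.ne' (ccwDist_eq_iff.mpr ⟨⟨le_rfl, one_pos⟩, by simp⟩)
  · exact (hlt i hij).false

theorem nonempty_arc [Finite ι] (hC : Function.Injective C) (j : ι) : (arc C j).Nonempty := by
  have hgap : ∀ i, ∀ᶠ t in 𝓝[>] (0 : ℝ), i ≠ j → t < ccwDist (C j) (C i) := by
    intro i
    by_cases hij : i = j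
    · exact .of_forall fun _ h => (h hij).elim
    · exact ((eventually_lt_nhds (ccwDist_pos_iff.mpr (hC.ne hij))).filter_mono
        nhdsWithin_le_nhds).mono fun _ h _ => h
  obtain ⟨t, hgap, hpos, hlt⟩ := ((eventually_all.mpr hgap).and (eventually_mem_nhdsWithin.and
    ((eventually_lt_nhds one_pos).filter_mono nhdsWithin_le_nhds))).exists
  have ht : t ∈ (Ioi 0 ∩ ⋂ (i) (_ : i ≠ j), Iio (ccwDist (C j) (C i))) ∩ Ico 0 1 := by
    simp only [mem_inter_iff, mem_iInter]
    exact ⟨⟨hpos, hgap⟩, hpos.le, hlt⟩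
  rw [arc, preimage_ccwDist]
  exact ⟨_, t, ht, rfl⟩

theorem pairwise_disjoint_arc (hC : Function.Injective C) :
    Pairwise fun i j => Disjoint (arc C i) (arc C j) := by
  intro i j hij
  refine Set.disjoint_left.mpr fun z hzi hzj => ?_
  have hCij : C i ≠ C j := hC.ne hij
  obtain ⟨-, hi⟩ := mem_arc.mp hzi
  obtain ⟨-, hj⟩ := mem_arc.mp hzj
  have hsum := ccwDist_add_ccwDist_swap hCij
  have hz : ccwDist (C i) z = ccwDist (C i) (C j) + ccwDist (C j) z :=
    ccwDist_add_ccwDist (by linarith [hj i hij])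
  linarith [hi j hij.symm, (ccwDist_mem_Ico (C j) z).1]

theorem iUnion_arc [Finite ι] [Nonempty ι] (hC : Function.Injective C) :
    ⋃ j, arc C j = (range C)ᶜ := by
  refine (iUnion_subset arc_subset_compl_range).antisymm fun z hz => ?_
  obtain ⟨j, hj⟩ := Finite.exists_min fun i => ccwDist (C i) z
  refine mem_iUnion.mpr
    ⟨j, mem_arc.mpr ⟨ccwDist_pos_iff.mpr fun h => hz ⟨j, h.symm⟩, fun i hij => ?_⟩⟩
  by_contra! hle
  have hpos : 0 < ccwDist (C j) (C i) := ccwDist_pos_iff.mpr (hC.ne hij)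
  linarith [hj i, ccwDist_sub_ccwDist hle]

end arc

theorem compl_singleton_eq_preimage_ccwDist (w : UnitAddCircle) :
    {w}ᶜ = ccwDist w ⁻¹' Ioi 0 := by
  ext z
  exact ccwDist_pos_iff.symm

theorem isPreconnected_compl_singleton (w : UnitAddCircle) :
    IsPreconnected ({w}ᶜ : Set UnitAddCircle) := by
  rw [compl_singleton_eq_preimage_ccwDist]
  exact isPreconnected_preimage_ccwDist w ordConnected_Ioi

theorem nonempty_compl_singleton (w : UnitAddCircle) : ({w}ᶜ : Set UnitAddCircle).Nonempty := by
  refine ⟨w + (2⁻¹ : ℝ), ?_⟩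
  rw [compl_singleton_eq_preimage_ccwDist, mem_preimage,
    ccwDist_add_coe w ⟨by norm_num, by norm_num⟩]
  norm_num

end UnitAddCircle

section ConnectedComponents

variable {X ι : Type*} [TopologicalSpace X]

theorem card_connectedComponents_of_iUnion_eq_univ {U : ι → Set X} (hopen : ∀ j, IsOpen (U j))
    (hconn : ∀ j, IsPreconnected (U j)) (hne : ∀ j, (U j).Nonempty)
    (hdisj : Pairwise fun i j => Disjoint (U i) (U j)) (hcover : ⋃ j, U j = univ) :
    Nat.card (ConnectedComponents X) = Nat.card ι := by
  have hcompl : ∀ j, (U j)ᶜ = ⋃ (i) (_ : i ≠ j), U i := by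
    intro j
    ext x
    obtain ⟨i, hi⟩ := iUnion_eq_univ_iff.mp hcover x
    simp only [mem_compl_iff, mem_iUnion, exists_prop]
    refine ⟨fun hx => ⟨i, fun h => hx (h ▸ hi), hi⟩, ?_⟩
    rintro ⟨i', hij, hx⟩ hxj
    exact Set.disjoint_left.mp (hdisj hij) hx hxj
  have hclopen : ∀ j, IsClopen (U j) := fun j =>
    ⟨isOpen_compl_iff.mp (hcompl j ▸ isOpen_biUnion fun i _ => hopen i), hopen j⟩
  have hcomp : ∀ j, ∀ x ∈ U j, connectedComponent x = U j := fun j x hx =>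
    ((hclopen j).connectedComponent_subset hx).antisymm ((hconn j).subset_connectedComponent hx)
  refine (Nat.card_eq_of_bijective (fun j => ConnectedComponents.mk (hne j).some) ⟨?_, ?_⟩).symm
  · intro i j hij
    by_contra hne'
    have hU : U i = U j := by
      rw [← hcomp i _ (hne i).some_mem, ← hcomp j _ (hne j).some_mem]
      exact ConnectedComponents.coe_eq_coe.mp hij
    exact Set.disjoint_left.mp (hdisj hne') (hne i).some_mem (hU ▸ (hne i).some_mem)
  · intro q
    obtain ⟨x, rfl⟩ := ConnectedComponents.surjective_coe q
    obtain ⟨j, hj⟩ := iUnion_eq_univ_iff.mp hcover x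
    refine ⟨j, ConnectedComponents.coe_eq_coe.mpr ?_⟩
    rw [hcomp j _ (hne j).some_mem, hcomp j x hj]

theorem card_connectedComponents_univ_pi {κ : Type*} {Y : κ → Type*}
    [∀ i, TopologicalSpace (Y i)]
    {t : ∀ i, Set (Y i)} (K : κ) (ht : ∀ i ≠ K, IsPreconnected (t i) ∧ (t i).Nonempty)
    {U : ι → Set (Y K)} (hopen : ∀ j, IsOpen (U j)) (hconn : ∀ j, IsPreconnected (U j))
    (hne : ∀ j, (U j).Nonempty) (hdisj : Pairwise fun i j => Disjoint (U i) (U j))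
    (hcover : ⋃ j, U j = t K) :
    Nat.card (ConnectedComponents (univ.pi t)) = Nat.card ι := by
  classical
  set V : ι → Set (univ.pi t) := fun j => (fun y => y.1 K) ⁻¹' U j
  have hV : ∀ j, Subtype.val '' V j = univ.pi (Function.update t K (U j)) := by
    intro j
    have hUt : U j ⊆ t K := hcover ▸ subset_iUnion U j
    change Subtype.val '' (Subtype.val ⁻¹' {y : ∀ i, Y i | y K ∈ U j}) = _
    ext y
    rw [Subtype.image_preimage_coe, mem_inter_iff, mem_univ_pi, mem_univ_pi, mem_ofPred_eq]
    refine ⟨fun ⟨hy, hyK⟩ i => ?_, fun hy => ⟨fun i => ?_, by simpa using hy K⟩⟩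
    · rcases eq_or_ne i K with rfl | hi
      · simpa using hyK
      · simpa [Function.update_of_ne hi] using hy i
    · rcases eq_or_ne i K with rfl | hi
      · exact hUt (by simpa using hy i)
      · simpa [Function.update_of_ne hi] using hy i
  have hfactor : ∀ j i, IsPreconnected (Function.update t K (U j) i) ∧
      (Function.update t K (U j) i).Nonempty := by
    intro j i
    rcases eq_or_ne i K with rfl | hi
    · simpa using ⟨hconn j, hne j⟩
    · simpa [Function.update_of_ne hi] using ht i hi
  refine card_connectedComponents_of_iUnion_eq_univ (U := V)
    (fun j => (hopen j).preimage ((continuous_apply K).comp continuous_subtype_val))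
    (fun j => ?_) (fun j => ?_) (fun i j hij => (hdisj hij).preimage _) ?_
  · rw [← Topology.IsInducing.subtypeVal.isPreconnected_image, hV]
    exact isPreconnected_univ_pi fun i => (hfactor j i).1
  · refine Nonempty.of_image (f := Subtype.val) ?_
    rw [hV]
    exact univ_pi_nonempty_iff.mpr fun i => (hfactor j i).2
  · rw [← preimage_iUnion, hcover]
    exact eq_univ_of_forall fun y => y.2 K (mem_univ K)

end ConnectedComponents

theorem image_torusQuot_setOf_apply_eq {d : ℕ} (i₀ : Fin d) (r : ℝ) :
    torusQuot d '' {x | x i₀ = r} = {y | y i₀ = (r : UnitAddCircle)} := by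
  ext y
  constructor
  · rintro ⟨x, hx, rfl⟩
    simp [torusQuot, hx.symm]
  · intro hy
    obtain ⟨x, rfl⟩ : ∃ x, torusQuot d x = y :=
      Function.Surjective.piMap (fun _ => QuotientAddGroup.mk_surjective) y
    refine ⟨Function.update x i₀ r, by simp, funext fun i => ?_⟩
    rcases eq_or_ne i i₀ with rfl | hi
    · simpa [torusQuot] using hy.symm
    · simp [torusQuot, Function.update_of_ne hi]

theorem compl_iUnion_coordinate_subtori {d k m : ℕ} (hkd : k < d) (c : Fin m → ℝ) :
    ((⋃ i : Fin k, torusQuot d '' {x | x ⟨i.1, by have := i.isLt; omega⟩ = 0}) ∪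
       (⋃ j : Fin m, torusQuot d '' {x | x ⟨k, hkd⟩ = c j}))ᶜ =
      univ.pi fun i => if i = ⟨k, hkd⟩ then (range fun j => (c j : UnitAddCircle))ᶜ
        else if i.1 < k then {0}ᶜ else univ := by
  ext y
  simp only [mem_compl_iff, mem_union, mem_iUnion, image_torusQuot_setOf_apply_eq, mem_ofPred_eq,
    not_or, not_exists, mem_univ_pi]
  constructor
  · rintro ⟨hzero, hcoord⟩ i
    split_ifs with hiK hik
    · rintro ⟨j, hj⟩
      subst hiK
      exact hcoord j hj.symm
    · exact fun h => hzero ⟨i, hik⟩ (by simpa using h)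
    · trivial
  · intro h
    refine ⟨fun i hi => ?_, fun j hj => ?_⟩
    · have hi' := h ⟨i, by omega⟩
      rw [if_neg (by simp [Fin.ext_iff, i.isLt.ne]), if_pos i.isLt] at hi'
      exact hi' (by simpa using hi)
    · have hk := h ⟨k, hkd⟩
      rw [if_pos rfl] at hk
      exact hk ⟨j, hj.symm⟩

/-- For `d ≥ 2`, `n > d`, `0 ≤ k ≤ d - 1`, and reals `c 1, …, c (n-k)` with pairwise
distinct fractional parts, the complement in `T^d` of the union of the subtori
`φ({x | x i = 0})` for `1 ≤ i ≤ k` and `φ({x | x (k+1) = c j})` for `1 ≤ j ≤ n - k`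
has exactly `n - k` connected components. -/
theorem card_components_coordinate_arrangement
    (d n k : ℕ) (hd : 2 ≤ d) (hn : d < n) (hk : k ≤ d - 1)
    (c : Fin (n - k) → ℝ)
    (hc : ∀ i j, Int.fract (c i) = Int.fract (c j) → i = j) :
    Nat.card (ConnectedComponents ↥(
      ((⋃ i : Fin k, torusQuot d '' {x | x ⟨i.1, by have := i.isLt; omega⟩ = 0}) ∪
       (⋃ j : Fin (n - k), torusQuot d '' {x | x ⟨k, by omega⟩ = c j}))ᶜ)) = n - k := by
  have hkd : k < d := by omega
  have : Nonempty (Fin (n - k)) := ⟨⟨0, by omega⟩⟩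
  have hC : Function.Injective fun j => (c j : UnitAddCircle) := fun i j h => hc i j <| by
    simpa [UnitAddCircle.ccwDist_zero_coe] using congrArg (UnitAddCircle.ccwDist 0) h
  rw [compl_iUnion_coordinate_subtori hkd, card_connectedComponents_univ_pi ⟨k, hkd⟩ ?_
    UnitAddCircle.isOpen_arc UnitAddCircle.isPreconnected_arc (UnitAddCircle.nonempty_arc hC)
    (UnitAddCircle.pairwise_disjoint_arc hC) (by simpa using UnitAddCircle.iUnion_arc hC),
    Nat.card_fin]
  intro i hi
  rw [if_neg hi]
  split_ifs
  · exact ⟨UnitAddCircle.isPreconnected_compl_singleton 0,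
      UnitAddCircle.nonempty_compl_singleton 0⟩
  · exact ⟨isPreconnected_univ, univ_nonempty⟩
end
end
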